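/- arXiv:2601.21213 — 2 statements merged into one kernel-verified Lean document; each statement's English description precedes it below -/
import Mathlib

section
/- Let $-3 < \gamma \leq 1$ and $c > 0$. There exists $C > 0$ such that for all $v \in \mathbb{R}^3$, $\int_{\mathbb{R}^3} \frac{(1 + |v| + |u|)^{\gamma - 1}}{|u|} e^{-c(|u|^2 + |v \cdot u|/|u|)}\, du \leq C (1+|v|)^{\gamma - 2}$. -/
open MeasureTheory
open scoped RealInnerProductSpace

open Real Set

/-!
After a rotation we may take `v = ‖v‖ e₀`, so that `|⟪v, u⟫| = ‖v‖ |u₀|`. Since `γ ≤ 1`, the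
weight is at most `(1 + ‖v‖)^(γ-1)`; `1/‖u‖ ≤ |u₁|^(-1/2) |u₂|^(-1/2)`; and the inequality
`a^(2/3) ≤ t² + 2a/t` splits `exp (-c (‖u‖² + a/‖u‖))` into `exp (-c‖u‖²/2) exp (-c a^(2/3)/2)`
with `a = ‖v‖ |u₀|`. The integrand is then dominated by a product of one-dimensional integrable
functions, and by the scaling `u₀ ↦ ‖v‖ u₀` the factor in `u₀` integrates to `O(1/(1 + ‖v‖))`,
which is the extra power of `1 + ‖v‖`.
-/

theorem exists_linearIsometryEquiv_inner_apply {E : Type*} [NormedAddCommGroup E]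
    [InnerProductSpace ℝ E] (v : E) {w : E} (hw : ‖w‖ = 1) :
    ∃ R : E ≃ₗᵢ[ℝ] E, ∀ x, ⟪v, R x⟫ = ‖v‖ * ⟪w, x⟫ := by
  let R := Submodule.reflection (ℝ ∙ (‖v‖ • w - v))ᗮ
  have hR : R (‖v‖ • w) = v :=
    Submodule.reflection_sub (by rw [norm_smul, hw, norm_norm, mul_one])
  refine ⟨R, fun x => ?_⟩
  calc ⟪v, R x⟫ = ⟪R (‖v‖ • w), R x⟫ := by rw [hR]
    _ = ‖v‖ * ⟪w, x⟫ := by rw [R.inner_map_map, real_inner_smul_left]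

theorem integrable_comp_abs_of_integrableOn_Ioi {E : Type*} [NormedAddCommGroup E] {f : ℝ → E}
    (hf : IntegrableOn f (Ioi 0)) : Integrable fun x => f |x| := by
  have hIoi : IntegrableOn (fun x => f |x|) (Ioi 0) :=
    hf.congr_fun (fun x hx => by rw [abs_of_pos hx]) measurableSet_Ioi
  rw [← integrableOn_univ, ← Iio_union_Ici (a := (0 : ℝ)), integrableOn_union,
    integrableOn_Ici_iff_integrableOn_Ioi]
  refine ⟨?_, hIoi⟩
  rw [← (Measure.measurePreserving_neg (volume : Measure ℝ)).integrableOn_comp_preimage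
      (Homeomorph.neg ℝ).measurableEmbedding]
  simpa [Function.comp_def] using hIoi

section OneDimensional

variable {b : ℝ}

theorem integrable_abs_rpow_mul_exp_neg_mul_sq (hb : 0 < b) {s : ℝ} (hs : -1 < s) :
    Integrable fun t : ℝ => |t| ^ s * exp (-b * t ^ 2) := by
  simpa only [sq_abs] using
    integrable_comp_abs_of_integrableOn_Ioi (integrableOn_rpow_mul_exp_neg_mul_sq hb hs)

theorem integrable_exp_neg_mul_abs_rpow (hb : 0 < b) {p : ℝ} (hp : 0 < p) :
    Integrable fun t : ℝ => exp (-b * |t| ^ p) := by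
  simpa only [rpow_zero, one_mul] using integrable_comp_abs_of_integrableOn_Ioi
    (integrableOn_rpow_mul_exp_neg_mul_rpow (s := 0) neg_one_lt_zero hp hb)

theorem exp_neg_mul_sq_mul_exp_neg_mul_rpow_le (hb : 0 ≤ b) {m : ℝ} (hm : 0 ≤ m) (p t : ℝ) :
    exp (-b * t ^ 2) * exp (-b * (m * |t|) ^ p) ≤ exp (-b * t ^ 2) :=
  mul_le_of_le_one_right (exp_pos _).le
    (exp_le_one_iff.mpr (mul_nonpos_of_nonpos_of_nonneg (by linarith) (by positivity)))

theorem integrable_exp_neg_mul_sq_mul_exp_neg_mul_rpow (hb : 0 < b) {m : ℝ} (hm : 0 ≤ m)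
    (p : ℝ) : Integrable fun t : ℝ => exp (-b * t ^ 2) * exp (-b * (m * |t|) ^ p) :=
  (integrable_exp_neg_mul_sq hb).mono' (by fun_prop) (.of_forall fun t => by
    rw [norm_of_nonneg (by positivity)]
    exact exp_neg_mul_sq_mul_exp_neg_mul_rpow_le hb.le hm p t)

theorem one_add_mul_integral_exp_neg_mul_sq_mul_exp_neg_mul_rpow_le (hb : 0 < b) {p m : ℝ}
    (hp : 0 < p) (hm : 0 ≤ m) :
    (1 + m) * ∫ t, exp (-b * t ^ 2) * exp (-b * (m * |t|) ^ p)
      ≤ (∫ t, exp (-b * t ^ 2)) + ∫ t, exp (-b * |t| ^ p) := by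
  set f := fun t : ℝ => exp (-b * t ^ 2) * exp (-b * (m * |t|) ^ p)
  have hf : Integrable f := integrable_exp_neg_mul_sq_mul_exp_neg_mul_rpow hb hm p
  have hf_le_scaled (t : ℝ) : f t ≤ exp (-b * |m * t| ^ p) := by
    rw [abs_mul, abs_of_nonneg hm]
    exact mul_le_of_le_one_left (exp_pos _).le
      (exp_le_one_iff.mpr (by nlinarith [sq_nonneg t]))
  have hG_bound : ∫ t, f t ≤ ∫ t, exp (-b * t ^ 2) :=
    integral_mono hf (integrable_exp_neg_mul_sq hb)
      (exp_neg_mul_sq_mul_exp_neg_mul_rpow_le hb.le hm p)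
  have hH_bound : m * ∫ t, f t ≤ ∫ t, exp (-b * |t| ^ p) := by
    rcases hm.eq_or_lt with rfl | hm
    · simpa using integral_nonneg fun t => (exp_pos _).le
    have hH := integrable_exp_neg_mul_abs_rpow hb hp
    calc m * ∫ t, f t ≤ m * ∫ t, exp (-b * |m * t| ^ p) :=
          mul_le_mul_of_nonneg_left (integral_mono hf (hH.comp_mul_left' hm.ne') hf_le_scaled)
            hm.le
      _ = ∫ t, exp (-b * |t| ^ p) := by
          rw [Measure.integral_comp_mul_left (fun t => exp (-b * |t| ^ p)),
            abs_of_pos (inv_pos.mpr hm), smul_eq_mul, mul_inv_cancel_left₀ hm.ne']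
  linarith

end OneDimensional

theorem rpow_two_thirds_le_sq_add_two_mul_div {t a : ℝ} (ht : 0 < t) (ha : 0 ≤ a) :
    a ^ (2 / 3 : ℝ) ≤ t ^ 2 + 2 * (a / t) := by
  set s := a ^ (1 / 3 : ℝ)
  have hs : 0 ≤ s := rpow_nonneg ha _
  have ha_eq : a = s ^ 3 := by rw [← rpow_natCast, ← rpow_mul ha]; norm_num
  have ha_two_thirds : a ^ (2 / 3 : ℝ) = s ^ 2 := by
    rw [← rpow_natCast, ← rpow_mul ha]; norm_num
  have key : t ^ 2 + 2 * (s ^ 3 / t) - s ^ 2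
      = ((t + s) * (t - s) ^ 2 + s ^ 3 + t ^ 2 * s) / t := by
    field_simp
    ring
  rw [ha_two_thirds, ha_eq, ← sub_nonneg, key]
  positivity

theorem exp_neg_mul_sq_add_div_le {c t a : ℝ} (hc : 0 ≤ c) (ht : 0 < t) (ha : 0 ≤ a) :
    exp (-c * (t ^ 2 + a / t)) ≤ exp (-(c / 2) * t ^ 2) * exp (-(c / 2) * a ^ (2 / 3 : ℝ)) := by
  rw [← exp_add, exp_le_exp]
  nlinarith [rpow_two_thirds_le_sq_add_two_mul_div ht ha]

namespace EuclideanSpace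

variable {ι : Type*} [Fintype ι]

theorem ae_apply_ne_zero (i : ι) : ∀ᵐ x : EuclideanSpace ℝ ι, x i ≠ 0 :=
  (PiLp.volume_preserving_ofLp ι).quasiMeasurePreserving.ae (by
    simpa only [volume_pi] using Measure.ae_eval_ne (fun _ => volume) i 0)

theorem integral_prod_apply (f : ι → ℝ → ℝ) :
    ∫ x : EuclideanSpace ℝ ι, ∏ i, f i (x i) = ∏ i, ∫ t, f i t := by
  rw [← (volume_preserving_symm_measurableEquiv_toLp ι).symm.integral_comp',
    ← integral_fintype_prod_volume_eq_prod]
  rfl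

theorem integrable_prod_apply {f : ι → ℝ → ℝ} (hf : ∀ i, Integrable (f i)) :
    Integrable fun x : EuclideanSpace ℝ ι => ∏ i, f i (x i) := by
  rw [← (PiLp.volume_preserving_toLp ι).integrable_comp_emb
    (MeasurableEquiv.toLp 2 _).measurableEmbedding]
  exact Integrable.fintype_prod hf

theorem exp_neg_mul_norm_sq (b : ℝ) (x : EuclideanSpace ℝ ι) :
    exp (-b * ‖x‖ ^ 2) = ∏ i, exp (-b * x i ^ 2) := by
  rw [real_norm_sq_eq, Finset.mul_sum, exp_sum]

theorem abs_mul_abs_le_norm_sq (x : EuclideanSpace ℝ ι) {i j : ι} (hij : i ≠ j) :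
    |x i| * |x j| ≤ ‖x‖ ^ 2 := by
  classical
  have hpair : x i ^ 2 + x j ^ 2 ≤ ‖x‖ ^ 2 := by
    rw [real_norm_sq_eq, ← Finset.sum_pair (f := fun k => x k ^ 2) hij]
    exact Finset.sum_le_sum_of_subset_of_nonneg (Finset.subset_univ _)
      fun _ _ _ => sq_nonneg _
  nlinarith [sq_nonneg (|x i| - |x j|), sq_abs (x i), sq_abs (x j)]

theorem inv_norm_le_abs_rpow_mul_abs_rpow {x : EuclideanSpace ℝ ι} {i j : ι} (hij : i ≠ j)
    (hi : x i ≠ 0) (hj : x j ≠ 0) :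
    ‖x‖⁻¹ ≤ |x i| ^ (-(1 / 2) : ℝ) * |x j| ^ (-(1 / 2) : ℝ) := by
  calc ‖x‖⁻¹ = (‖x‖ ^ 2) ^ (-(1 / 2) : ℝ) := by
        rw [rpow_neg (by positivity), ← sqrt_eq_rpow, sqrt_sq (norm_nonneg x)]
    _ ≤ (|x i| * |x j|) ^ (-(1 / 2) : ℝ) :=
        rpow_le_rpow_of_nonpos (by positivity) (abs_mul_abs_le_norm_sq x hij) (by norm_num)
    _ = |x i| ^ (-(1 / 2) : ℝ) * |x j| ^ (-(1 / 2) : ℝ) :=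
        mul_rpow (abs_nonneg _) (abs_nonneg _)

theorem integral_fin_three_mul (f g h : ℝ → ℝ) :
    ∫ x : EuclideanSpace ℝ (Fin 3), f (x 0) * g (x 1) * h (x 2)
      = (∫ t, f t) * (∫ t, g t) * ∫ t, h t := by
  simpa [Fin.prod_univ_three] using integral_prod_apply ![f, g, h]

theorem integrable_fin_three_mul {f g h : ℝ → ℝ} (hf : Integrable f) (hg : Integrable g)
    (hh : Integrable h) :
    Integrable fun x : EuclideanSpace ℝ (Fin 3) => f (x 0) * g (x 1) * h (x 2) := by
  simpa [Fin.prod_univ_three] using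
    integrable_prod_apply (f := ![f, g, h]) fun i => by fin_cases i <;> assumption

end EuclideanSpace

theorem rotated_kernel_le_prod {γ c m : ℝ} (hγ : γ ≤ 1) (hc : 0 ≤ c) (hm : 0 ≤ m)
    {x : EuclideanSpace ℝ (Fin 3)} (h₁ : x 1 ≠ 0) (h₂ : x 2 ≠ 0) :
    (1 + m + ‖x‖) ^ (γ - 1) / ‖x‖ * exp (-c * (‖x‖ ^ 2 + m * |x 0| / ‖x‖))
      ≤ (1 + m) ^ (γ - 1) *
        ((exp (-(c / 2) * x 0 ^ 2) * exp (-(c / 2) * (m * |x 0|) ^ (2 / 3 : ℝ)))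
          * (|x 1| ^ (-(1 / 2) : ℝ) * exp (-(c / 2) * x 1 ^ 2))
          * (|x 2| ^ (-(1 / 2) : ℝ) * exp (-(c / 2) * x 2 ^ 2))) := by
  have hx : 0 < ‖x‖ := norm_pos_iff.mpr fun h => h₁ (by simp [h])
  have hweight : (1 + m + ‖x‖) ^ (γ - 1) ≤ (1 + m) ^ (γ - 1) :=
    rpow_le_rpow_of_nonpos (by positivity) (by linarith) (by linarith)
  have hgauss : exp (-(c / 2) * ‖x‖ ^ 2)
      = exp (-(c / 2) * x 0 ^ 2) * exp (-(c / 2) * x 1 ^ 2) * exp (-(c / 2) * x 2 ^ 2) := by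
    rw [EuclideanSpace.exp_neg_mul_norm_sq, Fin.prod_univ_three]
  calc (1 + m + ‖x‖) ^ (γ - 1) / ‖x‖ * exp (-c * (‖x‖ ^ 2 + m * |x 0| / ‖x‖))
      = (1 + m + ‖x‖) ^ (γ - 1) * ‖x‖⁻¹ * exp (-c * (‖x‖ ^ 2 + m * |x 0| / ‖x‖)) := by
        rw [div_eq_mul_inv]
    _ ≤ (1 + m) ^ (γ - 1) * (|x 1| ^ (-(1 / 2) : ℝ) * |x 2| ^ (-(1 / 2) : ℝ))
        * (exp (-(c / 2) * ‖x‖ ^ 2) * exp (-(c / 2) * (m * |x 0|) ^ (2 / 3 : ℝ))) := by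
        gcongr
        · exact EuclideanSpace.inv_norm_le_abs_rpow_mul_abs_rpow (by decide) h₁ h₂
        · exact exp_neg_mul_sq_add_div_le hc hx (by positivity)
    _ = _ := by rw [hgauss]; ring

theorem integral_rotated_kernel_le {γ c m : ℝ} (hγ : γ ≤ 1) (hc : 0 < c) (hm : 0 ≤ m) :
    ∫ x : EuclideanSpace ℝ (Fin 3),
        (1 + m + ‖x‖) ^ (γ - 1) / ‖x‖ * exp (-c * (‖x‖ ^ 2 + m * |x 0| / ‖x‖))
      ≤ ((∫ t, exp (-(c / 2) * t ^ 2)) + ∫ t, exp (-(c / 2) * |t| ^ (2 / 3 : ℝ)))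
          * (∫ t, |t| ^ (-(1 / 2) : ℝ) * exp (-(c / 2) * t ^ 2)) ^ 2 * (1 + m) ^ (γ - 2) := by
  have hb : 0 < c / 2 := by positivity
  have hm₁ : 0 < 1 + m := by linarith
  set g₀ := fun t : ℝ => exp (-(c / 2) * t ^ 2) * exp (-(c / 2) * (m * |t|) ^ (2 / 3 : ℝ))
  set g₁ := fun t : ℝ => |t| ^ (-(1 / 2) : ℝ) * exp (-(c / 2) * t ^ 2)
  set G := (∫ t, exp (-(c / 2) * t ^ 2)) + ∫ t, exp (-(c / 2) * |t| ^ (2 / 3 : ℝ))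
  have hg₀ : Integrable g₀ := integrable_exp_neg_mul_sq_mul_exp_neg_mul_rpow hb hm _
  have hg₁ : Integrable g₁ := integrable_abs_rpow_mul_exp_neg_mul_sq hb (by norm_num)
  have hint₀ : ∫ t, g₀ t ≤ G / (1 + m) := by
    rw [le_div_iff₀ hm₁, mul_comm]
    exact one_add_mul_integral_exp_neg_mul_sq_mul_exp_neg_mul_rpow_le hb (by norm_num) hm
  have hpow : (1 + m) ^ (γ - 2) = (1 + m) ^ (γ - 1) / (1 + m) := by
    rw [show γ - 2 = γ - 1 - 1 by ring, rpow_sub hm₁ (γ - 1) 1, rpow_one]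
  calc _ ≤ ∫ x : EuclideanSpace ℝ (Fin 3),
          (1 + m) ^ (γ - 1) * (g₀ (x 0) * g₁ (x 1) * g₁ (x 2)) := by
        refine integral_mono_of_nonneg (.of_forall fun x => by positivity)
          ((EuclideanSpace.integrable_fin_three_mul hg₀ hg₁ hg₁).const_mul _) ?_
        filter_upwards [EuclideanSpace.ae_apply_ne_zero 1, EuclideanSpace.ae_apply_ne_zero 2]
          with x h₁ h₂
        exact rotated_kernel_le_prod hγ hc.le hm h₁ h₂
    _ = (1 + m) ^ (γ - 1) * ((∫ t, g₀ t) * (∫ t, g₁ t) * ∫ t, g₁ t) := by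
        rw [integral_const_mul, EuclideanSpace.integral_fin_three_mul]
    _ ≤ (1 + m) ^ (γ - 1) * (G / (1 + m) * (∫ t, g₁ t) * ∫ t, g₁ t) := by gcongr
    _ = G * (∫ t, g₁ t) ^ 2 * (1 + m) ^ (γ - 2) := by rw [hpow]; ring

theorem kernel_integral_bound_general (γ c : ℝ) (hγ₂ : γ ≤ 1) (hc : 0 < c) :
    ∃ C > 0, ∀ v : EuclideanSpace ℝ (Fin 3),
      ∫ u : EuclideanSpace ℝ (Fin 3),
          (1 + ‖v‖ + ‖u‖) ^ (γ - 1) / ‖u‖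
            * Real.exp (-c * (‖u‖ ^ 2 + |⟪v, u⟫| / ‖u‖))
        ≤ C * (1 + ‖v‖) ^ (γ - 2) := by
  set C := ((∫ t, exp (-(c / 2) * t ^ 2)) + ∫ t, exp (-(c / 2) * |t| ^ (2 / 3 : ℝ)))
    * (∫ t : ℝ, |t| ^ (-(1 / 2) : ℝ) * exp (-(c / 2) * t ^ 2)) ^ 2
  refine ⟨C + 1, by positivity, fun v => ?_⟩
  obtain ⟨R, hR⟩ := exists_linearIsometryEquiv_inner_apply v
    (w := EuclideanSpace.single 0 1) (by simp)
  rw [← R.measurePreserving.integral_comp R.toHomeomorph.measurableEmbedding]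
  simp only [R.norm_map, hR, EuclideanSpace.inner_single_left, map_one, one_mul, abs_mul,
    abs_norm]
  calc _ ≤ C * (1 + ‖v‖) ^ (γ - 2) := integral_rotated_kernel_le hγ₂ hc (norm_nonneg v)
    _ ≤ (C + 1) * (1 + ‖v‖) ^ (γ - 2) := by gcongr; linarith

/-- Key kernel-integrability estimate:
`∫ (1+|v|+|u|)^{γ-1}/|u| · e^{-c(|u|² + |v·u|/|u|)} du ≤ C (1+|v|)^{γ-2}`. -/
theorem kernel_integral_bound (γ c : ℝ) (hγ₁ : -3 < γ) (hγ₂ : γ ≤ 1) (hc : 0 < c) :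
    ∃ C > 0, ∀ v : EuclideanSpace ℝ (Fin 3),
      ∫ u : EuclideanSpace ℝ (Fin 3),
          (1 + ‖v‖ + ‖u‖) ^ (γ - 1) / ‖u‖
            * Real.exp (-c * (‖u‖ ^ 2 + |⟪v, u⟫| / ‖u‖))
        ≤ C * (1 + ‖v‖) ^ (γ - 2) :=
  kernel_integral_bound_general γ c hγ₂ hc
end

section
/- Let $m^\beta \geq m^\alpha > 0$. Define $c_{v_\parallel} = \frac{\sqrt{m^\beta} - \sqrt{m^\alpha}}{\sqrt{m^\beta} + \sqrt{m^\alpha}}$ (so $0 \leq c_{v_\parallel} < 1$). Then $c_{u,-} := c_{v_\parallel}\Big(\frac{\sqrt{m^\beta}}{2} + \frac{\sqrt{m^\alpha}m^\beta}{m^\alpha + m^\beta}\Big) - \Big(\frac{\sqrt{m^\beta}}{2} - \frac{\sqrt{m^\alpha}m^\beta}{m^\alpha + m^\beta}\Big)$ satisfies $c_{u,-} > 0$ if and only if $m^\alpha < m^\beta$, and $c_{u,-} = 0$ when $m^\alpha = m^\beta$. -/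
/-- The constant `c_{u,-}` is positive iff `mα < mβ`, and vanishes when `mα = mβ`. -/
theorem c_u_minus_sign (mα mβ : ℝ) (hmα : 0 < mα) (hle : mα ≤ mβ) :
    (0 < (Real.sqrt mβ - Real.sqrt mα) / (Real.sqrt mβ + Real.sqrt mα)
          * (Real.sqrt mβ / 2 + Real.sqrt mα * mβ / (mα + mβ))
          - (Real.sqrt mβ / 2 - Real.sqrt mα * mβ / (mα + mβ))
        ↔ mα < mβ)
    ∧ (mα = mβ →
        (Real.sqrt mβ - Real.sqrt mα) / (Real.sqrt mβ + Real.sqrt mα)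
          * (Real.sqrt mβ / 2 + Real.sqrt mα * mβ / (mα + mβ))
          - (Real.sqrt mβ / 2 - Real.sqrt mα * mβ / (mα + mβ)) = 0) := by
  have hmβ : 0 < mβ := lt_of_lt_of_le hmα hle
  set a := Real.sqrt mα with ha
  set b := Real.sqrt mβ with hb
  have hapos : 0 < a := Real.sqrt_pos.mpr hmα
  have hbpos : 0 < b := Real.sqrt_pos.mpr hmβ
  have hab : a ≤ b := Real.sqrt_le_sqrt hle
  have ha2 : a ^ 2 = mα := Real.sq_sqrt hmα.le
  have hb2 : b ^ 2 = mβ := Real.sq_sqrt hmβ.le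
  have hsum : 0 < mα + mβ := by linarith
  have habpos : 0 < b + a := by linarith
  have key : (b - a) / (b + a) * (b / 2 + a * mβ / (mα + mβ))
      - (b / 2 - a * mβ / (mα + mβ)) = a * b * (b - a) / (mα + mβ) := by
    rw [← ha2, ← hb2]
    field_simp
    ring
  rw [key]
  constructor
  · rw [div_pos_iff]
    constructor
    · rintro (⟨h1, _⟩ | ⟨_, h2⟩)
      · have hba : 0 < b - a := by
          by_contra hc
          push_neg at hc
          nlinarith [mul_pos hapos hbpos]
        calc mα = a ^ 2 := ha2.symm
          _ < b ^ 2 := by nlinarith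
          _ = mβ := hb2
      · linarith
    · intro h
      have : a < b := by
        rw [ha, hb]; exact Real.sqrt_lt_sqrt hmα.le h
      exact Or.inl ⟨mul_pos (mul_pos hapos hbpos) (sub_pos.mpr this), hsum⟩
  · intro h
    have : a = b := by rw [ha, hb, h]
    rw [this]; ring
end
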